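/- Let ψ : ℚ[T,X,Y] → ℚ[x,y,z] be the ℚ-algebra homomorphism determined by T ↦ 4z + 2y − x, X ↦ y(y − x) + (z/2)(7y + 7z − 3x), Y ↦ (z/2)(y − x + z). Then for every integer ℓ ≥ 0, ψ(∏_{i=0}^{ℓ}((2i+1)²·((i(i+1)/2)(X + Y) − Y) − (i²(i+1)²/2)·T²)) = (−1/2)^{ℓ+1} · z · (z − (ℓ+1)²x + (ℓ+1)y) · ∏_{i=1}^{ℓ}(z − i²x + iy)(z − i²x − iy) in ℚ[x,y,z]. In particular the relation ∏_{i=0}^{ℓ}((2i+1)²((i(i+1)/2)(X+Y) − Y) − (i²(i+1)²/2)T²) is mapped to a polynomial multiple of z·∏_{i=1}^{ℓ}(z − i²x + iy)(z − i²x − iy). -/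

import Mathlib

/-!
Under `ψ` each factor of the relation splits into two linear forms of the shape
`L_a = z − a²x + a·y`: the `i`-th factor becomes `−½·L_{i+1}·L_{−i}`. Multiplying over
`i = 0, …, ℓ`, the forms `L_{i+1}` and `L_{−i}` pair up into `L_i·L_{−i}` for
`1 ≤ i ≤ ℓ`, leaving `L_0 = z` and `L_{ℓ+1}` over.
-/

open MvPolynomial Finset

/-- The ℚ-algebra homomorphism ℚ[T,X,Y] → ℚ[x,y,z] (with `T = X 0, X = X 1, Y = X 2`
in the source and `x = X 0, y = X 1, z = X 2` in the target) determined by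
`T ↦ 4z + 2y − x`, `X ↦ y(y − x) + (z/2)(7y + 7z − 3x)`, `Y ↦ (z/2)(y − x + z)`. -/
noncomputable def psi : MvPolynomial (Fin 3) ℚ →ₐ[ℚ] MvPolynomial (Fin 3) ℚ :=
  aeval ![4 * X 2 + 2 * X 1 - X 0,
          X 1 * (X 1 - X 0) + C (1/2 : ℚ) * X 2 * (7 * X 1 + 7 * X 2 - 3 * X 0),
          C (1/2 : ℚ) * X 2 * (X 1 - X 0 + X 2)]

theorem Finset.prod_range_succ_mul_shift {M : Type*} [CommMonoid M] (f g : ℕ → M) (n : ℕ) :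
    ∏ i ∈ range (n + 1), (f (i + 1) * g i) =
      g 0 * f (n + 1) * ∏ i ∈ Icc 1 n, (f i * g i) := by
  induction n with
  | zero => simp [mul_comm]
  | succ n ih =>
    rw [prod_range_succ, ih, prod_Icc_succ_top (by omega)]
    ac_rfl

noncomputable def linearForm (a : ℚ) : MvPolynomial (Fin 3) ℚ :=
  X 2 - C (a ^ 2) * X 0 + C a * X 1

lemma linearForm_zero : linearForm 0 = X 2 := by
  simp [linearForm]

lemma linearForm_neg (a : ℚ) : linearForm (-a) = X 2 - C (a ^ 2) * X 0 - C a * X 1 := by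
  simp [linearForm, sub_eq_add_neg]

lemma psi_relation_factor (a : ℚ) :
    psi (C ((2 * a + 1) ^ 2) * (C (a * (a + 1) / 2) * (X 1 + X 2) - X 2) -
        C (a ^ 2 * (a + 1) ^ 2 / 2) * X 0 ^ 2) =
      C (-(1/2) : ℚ) * (linearForm (a + 1) * linearForm (-a)) := by
  refine MvPolynomial.funext fun v => ?_
  simp only [psi, linearForm, map_sub, map_mul, map_add, map_pow, map_neg, map_ofNat,
    aeval_C, aeval_X, algebraMap_eq, eval_C, eval_X, Matrix.cons_val]
  ring

/-- For every `ℓ ≥ 0`: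
`ψ(∏_{i=0}^{ℓ}((2i+1)²·((i(i+1)/2)(X + Y) − Y) − (i²(i+1)²/2)·T²))
 = (−1/2)^{ℓ+1}·z·(z − (ℓ+1)²x + (ℓ+1)y)·∏_{i=1}^{ℓ}(z − i²x + iy)(z − i²x − iy)`;
in particular the relation of `H*(BG¹_μ;ℚ)` is mapped to a polynomial multiple of
the relation `z·∏_{i=1}^{ℓ}(z − i²x + iy)(z − i²x − iy)` of `H*(BG̃¹_{μ,c};ℚ)`. -/
theorem psi_maps_relation (ℓ : ℕ) :
    psi (∏ i ∈ Finset.range (ℓ + 1),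
        (C ((2 * (i : ℚ) + 1) ^ 2) *
            (C ((i : ℚ) * ((i : ℚ) + 1) / 2) * (X 1 + X 2) - X 2) -
          C ((i : ℚ) ^ 2 * ((i : ℚ) + 1) ^ 2 / 2) * X 0 ^ 2)) =
      C (-(1/2) : ℚ) ^ (ℓ + 1) *
        (X 2 * (X 2 - C (((ℓ : ℚ) + 1) ^ 2) * X 0 + C ((ℓ : ℚ) + 1) * X 1) *
          ∏ i ∈ Icc 1 ℓ,
            ((X 2 - C ((i : ℚ) ^ 2) * X 0 + C (i : ℚ) * X 1) *
              (X 2 - C ((i : ℚ) ^ 2) * X 0 - C (i : ℚ) * X 1))) ∧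
    psi (∏ i ∈ Finset.range (ℓ + 1),
        (C ((2 * (i : ℚ) + 1) ^ 2) *
            (C ((i : ℚ) * ((i : ℚ) + 1) / 2) * (X 1 + X 2) - X 2) -
          C ((i : ℚ) ^ 2 * ((i : ℚ) + 1) ^ 2 / 2) * X 0 ^ 2)) ∈
      Ideal.span {(X 2 : MvPolynomial (Fin 3) ℚ) *
          ∏ i ∈ Icc 1 ℓ,
            ((X 2 - C ((i : ℚ) ^ 2) * X 0 + C (i : ℚ) * X 1) *
              (X 2 - C ((i : ℚ) ^ 2) * X 0 - C (i : ℚ) * X 1))} := by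
  have image : psi (∏ i ∈ Finset.range (ℓ + 1),
        (C ((2 * (i : ℚ) + 1) ^ 2) *
            (C ((i : ℚ) * ((i : ℚ) + 1) / 2) * (X 1 + X 2) - X 2) -
          C ((i : ℚ) ^ 2 * ((i : ℚ) + 1) ^ 2 / 2) * X 0 ^ 2)) =
      C (-(1/2) : ℚ) ^ (ℓ + 1) *
        (linearForm 0 * linearForm ((ℓ : ℚ) + 1) *
          ∏ i ∈ Icc 1 ℓ, (linearForm i * linearForm (-i))) := by
    have pairing :=
      prod_range_succ_mul_shift (fun i : ℕ => linearForm i) (fun i : ℕ => linearForm (-i)) ℓ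
    push_cast at pairing
    rw [map_prod]
    simp_rw [psi_relation_factor]
    rw [prod_mul_distrib, prod_const, card_range, pairing, neg_zero]
  rw [image, linearForm_zero]
  simp_rw [linearForm_neg]
  unfold linearForm
  refine ⟨rfl, Ideal.mem_span_singleton.2 ⟨C (-(1/2) : ℚ) ^ (ℓ + 1) *
    (X 2 - C (((ℓ : ℚ) + 1) ^ 2) * X 0 + C ((ℓ : ℚ) + 1) * X 1), by ring⟩⟩
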